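/- Fix ρ ∈ (0,1). For k ≥ 1 and N = M^k, let X = X_ρ := {c + m mod N : c ∈ C_k, m ∈ ℤ, |m| ≤ 2N^{1−ρ}} ⊆ Z_N, and let T := 1_X ∘ F_N ∘ 1_X be the operator on ℓ²(Z_N) obtained by composing multiplication by the indicator of X, the discrete Fourier transform F_N, and multiplication by the indicator of X. Then there is a constant C > 0, independent of k, such that tr((T*T)²) ≤ C·N^{4(1−ρ)}·t_k for all k ≥ 1. -/

import Mathlib

open scoped BigOperators
open Matrix

/-- Entry of the unitary discrete Fourier transform on `ℓ²(Z_N)`. -/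
noncomputable def dftEnt (N j l : ℕ) : ℂ :=
  ((1 : ℝ) / Real.sqrt N : ℝ) * Complex.exp (-(2 * (Real.pi : ℂ) * Complex.I * j * l) / N)

/-- The unitary discrete Fourier transform as an `N × N` matrix. -/
noncomputable def dftM (N : ℕ) : Matrix (Fin N) (Fin N) ℂ :=
  Matrix.of fun j l => dftEnt N j.val l.val

/-- The Cantor iterates `C_k = {Σ_{j<k} a_j M^j : a_j ∈ A} ⊆ {0,…,M^k-1}`. -/
def Ck (M : ℕ) (A : Finset ℕ) (k : ℕ) : Finset ℕ :=
  (Fintype.piFinset fun _ : Fin k => A).image fun a => ∑ j : Fin k, a j * M ^ (j : ℕ)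

/-- The discrete Fourier transform of the indicator function of `S ⊆ Z_N`. -/
noncomputable def dftInd (N : ℕ) (S : Finset ℕ) (m : ℕ) : ℂ :=
  ((1 : ℝ) / Real.sqrt N : ℝ) * ∑ l ∈ Finset.range N,
    (if l ∈ S then (1 : ℂ) else 0) * Complex.exp (-(2 * (Real.pi : ℂ) * Complex.I * m * l) / N)

/-- `t_k = (1/N) Σ_{j,ℓ ∈ Z_N} 1_{C_k}(j) 1_{C_k}(ℓ) |F_N(1_{C_k})(ℓ-j)|²`, `N = M^k`. -/
noncomputable def tk (M : ℕ) (A : Finset ℕ) (k : ℕ) : ℝ :=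
  ((1 : ℝ) / ((M ^ k : ℕ) : ℝ)) * ∑ j ∈ Finset.range (M ^ k), ∑ l ∈ Finset.range (M ^ k),
    (if j ∈ Ck M A k then (1 : ℝ) else 0) * (if l ∈ Ck M A k then (1 : ℝ) else 0) *
      ‖dftInd (M ^ k) (Ck M A k) (l + M ^ k - j)‖ ^ 2

/-- `X = X_ρ = {c + m mod N : c ∈ C_k, m ∈ ℤ, |m| ≤ 2 N^{1-ρ}} ⊆ Z_N`, `N = M^k`. -/
def Xrho (M : ℕ) (A : Finset ℕ) (ρ : ℝ) (k : ℕ) : Set (Fin (M ^ k)) :=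
  {x | ∃ c ∈ Ck M A k, ∃ m : ℤ, |(m : ℝ)| ≤ 2 * ((M ^ k : ℕ) : ℝ) ^ (1 - ρ) ∧
    (x.val : ℤ) ≡ (c : ℤ) + m [ZMOD ((M ^ k : ℕ) : ℤ)]}

/-- The operator `T = 1_X ∘ F_N ∘ 1_X` on `ℓ²(Z_N)`, with `X = X_ρ`. -/
noncomputable def Topk (M : ℕ) (A : Finset ℕ) (ρ : ℝ) (k : ℕ) :
    Matrix (Fin (M ^ k)) (Fin (M ^ k)) ℂ :=
  Matrix.diagonal ((Xrho M A ρ k).indicator fun _ => (1 : ℂ)) * dftM (M ^ k) *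
    Matrix.diagonal ((Xrho M A ρ k).indicator fun _ => (1 : ℂ))

/-!
Let `ψ` be the standard additive character of `ZMod N` and, for `U V ⊆ ZMod N`, let
`E(U, V) = ∑_{u, u' ∈ U} |∑_{v ∈ V} ψ((u - u') v)|²`, which expands to the fourfold sum of
`ψ((u - u')(v - v'))` over `u, u' ∈ U` and `v, v' ∈ V`.
Expanding the matrix entries gives `tr((T*T)²) = N⁻² E(X, X)` and `t_k = N⁻² E(C, C)`.
If `U ⊆ C + I`, covering both variables of `U` and then exchanging the roles of `U` and `V` in
the fourfold sum (the leftover twist `ψ((s - s')(v - v'))` has modulus one) gives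
`E(U, V) ≤ |I|² E(V, C)`. Since `X ⊆ C + I` for the integer window `I = [-L, L]`,
`L = ⌊2 N^{1-ρ}⌋`, two applications give `E(X, X) ≤ |I|⁴ E(C, C)` with `|I| ≤ 5 N^{1-ρ}`.
-/

open Finset
open scoped Pointwise

lemma Finset.sum_le_sum_add_of_subset_add {α N : Type*} [DecidableEq α] [Add α] [AddCommMonoid N]
    [PartialOrder N] [IsOrderedAddMonoid N] {f : α → N} (hf : ∀ x, 0 ≤ f x)
    {U C I : Finset α} (hU : U ⊆ C + I) :
    ∑ u ∈ U, f u ≤ ∑ c ∈ C, ∑ s ∈ I, f (c + s) := by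
  calc ∑ u ∈ U, f u ≤ ∑ u ∈ C + I, f u := sum_le_sum_of_subset_of_nonneg hU fun _ _ _ => hf _
    _ ≤ ∑ p ∈ C ×ˢ I, f (p.1 + p.2) := by
        rw [add_def]; exact sum_image_le_of_nonneg fun _ _ => hf _
    _ = ∑ c ∈ C, ∑ s ∈ I, f (c + s) := sum_product' C I fun c s => f (c + s)

lemma Finset.product_subset_add_product {α β : Type*} [DecidableEq α] [DecidableEq β] [Add α]
    [Add β] {U C I : Finset α} {V D J : Finset β} (hU : U ⊆ C + I) (hV : V ⊆ D + J) :
    U ×ˢ V ⊆ C ×ˢ D + I ×ˢ J := by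
  rintro ⟨u, v⟩ huv
  obtain ⟨hu, hv⟩ := mem_product.mp huv
  obtain ⟨c₁, hc₁, s₁, hs₁, rfl⟩ := mem_add.mp (hU hu)
  obtain ⟨c₂, hc₂, s₂, hs₂, rfl⟩ := mem_add.mp (hV hv)
  exact add_mem_add (mk_mem_product hc₁ hc₂) (mk_mem_product hs₁ hs₂)

section FourierEnergy

variable {R : Type*} [CommRing R] (ψ : AddChar R ℂ)

noncomputable def fourierEnergy (U V : Finset R) : ℝ :=
  ∑ u₁ ∈ U, ∑ u₂ ∈ U, ‖∑ v ∈ V, ψ ((u₁ - u₂) * v)‖ ^ 2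

lemma sq_norm_sum_addChar [Finite R] (m : R) (V : Finset R) :
    ((‖∑ v ∈ V, ψ (m * v)‖ ^ 2 : ℝ) : ℂ) = ∑ v₁ ∈ V, ∑ v₂ ∈ V, ψ (m * (v₁ - v₂)) := by
  rw [Complex.ofReal_pow, ← Complex.mul_conj', map_sum, sum_mul_sum]
  refine sum_congr rfl fun v₁ _ => sum_congr rfl fun v₂ _ => ?_
  rw [← AddChar.map_neg_eq_conj, ← AddChar.map_add_eq_mul, mul_sub, sub_eq_add_neg]

lemma fourierEnergy_nonneg (U V : Finset R) : 0 ≤ fourierEnergy ψ U V := by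
  unfold fourierEnergy; positivity

lemma sum_sq_norm_sum_addChar_translate_le [Finite R] (U V : Finset R) (β : R) :
    ∑ u₁ ∈ U, ∑ u₂ ∈ U, ‖∑ v ∈ V, ψ ((u₁ - u₂ + β) * v)‖ ^ 2 ≤ fourierEnergy ψ V U := by
  have expand : ((∑ u₁ ∈ U, ∑ u₂ ∈ U, ‖∑ v ∈ V, ψ ((u₁ - u₂ + β) * v)‖ ^ 2 : ℝ) : ℂ) =
      ∑ v₁ ∈ V, ∑ v₂ ∈ V, ψ (β * (v₁ - v₂)) * ((‖∑ u ∈ U, ψ ((v₁ - v₂) * u)‖ ^ 2 : ℝ) : ℂ) := by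
    simp only [Complex.ofReal_sum, sq_norm_sum_addChar, mul_sum, ← sum_product' (β := ℂ) U U,
      ← sum_product' (β := ℂ) V V]
    rw [sum_comm]
    refine sum_congr rfl fun v _ => sum_congr rfl fun u _ => ?_
    rw [← AddChar.map_add_eq_mul]
    ring_nf
  calc _ = ‖((∑ u₁ ∈ U, ∑ u₂ ∈ U, ‖∑ v ∈ V, ψ ((u₁ - u₂ + β) * v)‖ ^ 2 : ℝ) : ℂ)‖ := by
        rw [Complex.norm_real, Real.norm_of_nonneg (by positivity)]
    _ ≤ ∑ v₁ ∈ V, ∑ v₂ ∈ V, ‖ψ (β * (v₁ - v₂)) * ((‖∑ u ∈ U, ψ ((v₁ - v₂) * u)‖ ^ 2 : ℝ) : ℂ)‖ := by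
        rw [expand]
        exact (norm_sum_le _ _).trans (sum_le_sum fun _ _ => norm_sum_le _ _)
    _ = fourierEnergy ψ V U := by
        simp [fourierEnergy]

lemma fourierEnergy_le_of_subset_add [Finite R] [DecidableEq R] {U V C I : Finset R}
    (hU : U ⊆ C + I) :
    fourierEnergy ψ U V ≤ (#I : ℝ) ^ 2 * fourierEnergy ψ V C := by
  set Φ : R → ℝ := fun m => ‖∑ v ∈ V, ψ (m * v)‖ ^ 2
  calc fourierEnergy ψ U V = ∑ u ∈ U ×ˢ U, Φ (u.1 - u.2) := (sum_product' U U _).symm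
    _ ≤ ∑ c ∈ C ×ˢ C, ∑ s ∈ I ×ˢ I, Φ ((c + s).1 - (c + s).2) :=
        sum_le_sum_add_of_subset_add (fun _ => sq_nonneg _) (product_subset_add_product hU hU)
    _ = ∑ s ∈ I ×ˢ I, ∑ c ∈ C ×ˢ C, Φ (c.1 - c.2 + (s.1 - s.2)) := by
        rw [sum_comm]
        refine sum_congr rfl fun s _ => sum_congr rfl fun c _ => ?_
        simp only [Prod.fst_add, Prod.snd_add]
        ring_nf
    _ ≤ ∑ s ∈ I ×ˢ I, fourierEnergy ψ V C := by
        refine sum_le_sum fun s _ => ?_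
        rw [sum_product' (f := fun c₁ c₂ => Φ (c₁ - c₂ + (s.1 - s.2)))]
        exact sum_sq_norm_sum_addChar_translate_le ψ C V _
    _ = (#I : ℝ) ^ 2 * fourierEnergy ψ V C := by
        rw [sum_const, card_product, nsmul_eq_mul]; push_cast; ring

lemma fourierEnergy_self_le_of_subset_add [Finite R] [DecidableEq R] {U C I : Finset R}
    (hU : U ⊆ C + I) :
    fourierEnergy ψ U U ≤ (#I : ℝ) ^ 4 * fourierEnergy ψ C C :=
  calc fourierEnergy ψ U U ≤ (#I : ℝ) ^ 2 * fourierEnergy ψ U C :=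
        fourierEnergy_le_of_subset_add ψ hU
    _ ≤ (#I : ℝ) ^ 2 * ((#I : ℝ) ^ 2 * fourierEnergy ψ C C) := by
        gcongr; exact fourierEnergy_le_of_subset_add ψ hU
    _ = (#I : ℝ) ^ 4 * fourierEnergy ψ C C := by ring

end FourierEnergy

lemma Matrix.re_trace_conjTranspose_mul_self {m n : Type*} [Fintype m] [Fintype n]
    (B : Matrix m n ℂ) : (Bᴴ * B).trace.re = ∑ i, ∑ j, ‖B i j‖ ^ 2 := by
  simp only [trace, diag, mul_apply, conjTranspose_apply, Complex.re_sum]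
  rw [sum_comm]
  refine sum_congr rfl fun i _ => sum_congr rfl fun j _ => ?_
  rw [RCLike.star_def, Complex.conj_mul', ← Complex.ofReal_pow, Complex.ofReal_re]

noncomputable def Matrix.compress {n : Type*} [Fintype n] [DecidableEq n] (X : Set n)
    (F : Matrix n n ℂ) : Matrix n n ℂ :=
  diagonal (X.indicator fun _ => (1 : ℂ)) * F * diagonal (X.indicator fun _ => 1)

lemma Matrix.re_trace_sq_conjTranspose_mul_compress {n : Type*} [Fintype n] [DecidableEq n]
    (X : Finset n) (F : Matrix n n ℂ) :
    (((compress X F)ᴴ * compress X F) ^ 2).trace.re =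
      ∑ a ∈ X, ∑ b ∈ X, ‖∑ c ∈ X, star (F c a) * F c b‖ ^ 2 := by
  set T := compress X F
  have hT : ∀ c a, T c a = if c ∈ X ∧ a ∈ X then F c a else 0 := by
    intro c a
    simp only [T, compress, mul_diagonal, diagonal_mul, Set.indicator_apply, mem_coe]
    split_ifs <;> simp_all
  have hTT : ∀ a b, (Tᴴ * T) a b = if a ∈ X ∧ b ∈ X then ∑ c ∈ X, star (F c a) * F c b else 0 := by
    intro a b
    simp only [mul_apply, conjTranspose_apply, hT]
    split_ifs with h
    · rw [← univ_inter X, ← sum_ite_mem]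
      exact sum_congr rfl fun c _ => by split_ifs <;> simp_all
    · exact sum_eq_zero fun c _ => by split_ifs <;> simp_all
  nth_rewrite 1 [pow_two, ← (isHermitian_conjTranspose_mul_self T).eq]
  rw [re_trace_conjTranspose_mul_self]
  simp only [hTT, ite_and, apply_ite (fun z : ℂ => ‖z‖ ^ 2), norm_zero]
  simp [sum_ite_mem]

def Fin.castZMod (N : ℕ) : Fin N ↪ ZMod N where
  toFun a := (a : ℕ)
  inj' a b h := by
    rwa [ZMod.natCast_eq_natCast_iff', Nat.mod_eq_of_lt a.2, Nat.mod_eq_of_lt b.2, Fin.val_inj] at h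

@[simp] lemma Fin.castZMod_apply (N : ℕ) (a : Fin N) : Fin.castZMod N a = (a : ℕ) := rfl

def zmodResidues (N : ℕ) (S : Finset ℕ) : Finset (ZMod N) :=
  (univ.filter fun a : Fin N => (a : ℕ) ∈ S).map (Fin.castZMod N)

lemma sum_range_indicator_mul_eq_sum_zmodResidues {β : Type*} [NonAssocSemiring β] {N : ℕ}
    (S : Finset ℕ) (f : ZMod N → β) :
    ∑ j ∈ range N, (if j ∈ S then (1 : β) else 0) * f j = ∑ u ∈ zmodResidues N S, f u := by
  rw [← Fin.sum_univ_eq_sum_range (fun j => (if j ∈ S then (1 : β) else 0) * f j), zmodResidues,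
    sum_map, sum_filter]
  simp only [ite_mul, one_mul, zero_mul, Fin.castZMod_apply]

section DFT

variable {N : ℕ} [NeZero N]

lemma exp_neg_eq_stdAddChar (j l : ℕ) :
    Complex.exp (-(2 * (Real.pi : ℂ) * Complex.I * j * l) / N) =
      ZMod.stdAddChar (-((j : ZMod N) * (l : ZMod N))) := by
  have : -((j : ZMod N) * (l : ZMod N)) = ((-(j * l : ℤ) : ℤ) : ZMod N) := by push_cast; ring
  rw [this, ZMod.stdAddChar_coe]
  congr 1
  push_cast
  ring

lemma star_dftM_mul_dftM (a b c : Fin N) :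
    star (dftM N c a) * dftM N c b =
      (N : ℂ)⁻¹ * ZMod.stdAddChar ((Fin.castZMod N a - Fin.castZMod N b) * Fin.castZMod N c) := by
  simp only [dftM, dftEnt, of_apply, exp_neg_eq_stdAddChar, star_mul', Fin.castZMod_apply,
    RCLike.star_def, Complex.conj_ofReal, ← AddChar.map_neg_eq_conj]
  have hscale : ((1 / √N : ℝ) : ℂ) * ((1 / √N : ℝ) : ℂ) = (N : ℂ)⁻¹ := by
    rw [← Complex.ofReal_mul, div_mul_div_comm, one_mul, Real.mul_self_sqrt (Nat.cast_nonneg _)]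
    push_cast
    rw [one_div]
  rw [mul_mul_mul_comm, hscale, ← AddChar.map_add_eq_mul]
  ring_nf

lemma re_trace_sq_conjTranspose_mul_compress_dftM (X : Finset (Fin N)) :
    (((compress X (dftM N))ᴴ * compress X (dftM N)) ^ 2).trace.re = ((N : ℝ) ^ 2)⁻¹ *
      fourierEnergy ZMod.stdAddChar (X.map (Fin.castZMod N)) (X.map (Fin.castZMod N)) := by
  rw [re_trace_sq_conjTranspose_mul_compress, fourierEnergy, sum_map, mul_sum]
  refine sum_congr rfl fun a _ => ?_
  rw [sum_map, mul_sum]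
  refine sum_congr rfl fun b _ => ?_
  rw [sum_map]
  simp only [star_dftM_mul_dftM, ← mul_sum, norm_mul, mul_pow, norm_inv, Complex.norm_natCast,
    inv_pow]

lemma dftInd_eq_sum_zmodResidues (S : Finset ℕ) (m : ℕ) :
    dftInd N S m =
      ((1 / √N : ℝ) : ℂ) * ∑ c ∈ zmodResidues N S, ZMod.stdAddChar (-((m : ZMod N) * c)) := by
  simp only [dftInd, exp_neg_eq_stdAddChar]
  rw [sum_range_indicator_mul_eq_sum_zmodResidues S fun c => ZMod.stdAddChar (-((m : ZMod N) * c))]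

lemma sq_norm_dftInd_add_sub (S : Finset ℕ) {j l : ℕ} (hj : j ≤ l + N) :
    ‖dftInd N S (l + N - j)‖ ^ 2 = (N : ℝ)⁻¹ *
      ‖∑ c ∈ zmodResidues N S, ZMod.stdAddChar (((j : ZMod N) - (l : ZMod N)) * c)‖ ^ 2 := by
  have hcast : ((l + N - j : ℕ) : ZMod N) = l - j := by
    rw [Nat.cast_sub hj, Nat.cast_add, ZMod.natCast_self, add_zero]
  rw [dftInd_eq_sum_zmodResidues, norm_mul, mul_pow, Complex.norm_real, Real.norm_eq_abs, sq_abs,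
    div_pow, one_pow, Real.sq_sqrt (Nat.cast_nonneg _), one_div, hcast]
  simp only [neg_mul_eq_neg_mul, neg_sub]

end DFT

lemma tk_eq_fourierEnergy (M : ℕ) (A : Finset ℕ) (k : ℕ) [NeZero (M ^ k)] :
    tk M A k = (((M ^ k : ℕ) : ℝ) ^ 2)⁻¹ * fourierEnergy ZMod.stdAddChar
      (zmodResidues (M ^ k) (Ck M A k)) (zmodResidues (M ^ k) (Ck M A k)) := by
  set N := M ^ k
  set C := Ck M A k
  calc tk M A k = (1 / (N : ℝ)) * ∑ j ∈ range N, (if j ∈ C then (1 : ℝ) else 0) *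
        ∑ l ∈ range N, (if l ∈ C then (1 : ℝ) else 0) * ((N : ℝ)⁻¹ *
          ‖∑ c ∈ zmodResidues N C, ZMod.stdAddChar (((j : ZMod N) - (l : ZMod N)) * c)‖ ^ 2) := by
        rw [tk]
        congr 1
        refine sum_congr rfl fun j hj => ?_
        rw [mul_sum]
        refine sum_congr rfl fun l _ => ?_
        rw [sq_norm_dftInd_add_sub C (by have := mem_range.mp hj; omega), mul_assoc]
    _ = (1 / (N : ℝ)) * ∑ u₁ ∈ zmodResidues N C, ∑ u₂ ∈ zmodResidues N C, ((N : ℝ)⁻¹ *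
          ‖∑ c ∈ zmodResidues N C, ZMod.stdAddChar ((u₁ - u₂) * c)‖ ^ 2) := by
        congr 1
        rw [← sum_range_indicator_mul_eq_sum_zmodResidues C fun u₁ => ∑ u₂ ∈ zmodResidues N C,
          (N : ℝ)⁻¹ * ‖∑ c ∈ zmodResidues N C, ZMod.stdAddChar ((u₁ - u₂) * c)‖ ^ 2]
        refine sum_congr rfl fun j _ => ?_
        rw [sum_range_indicator_mul_eq_sum_zmodResidues C fun u₂ =>
          (N : ℝ)⁻¹ * ‖∑ c ∈ zmodResidues N C, ZMod.stdAddChar (((j : ZMod N) - u₂) * c)‖ ^ 2]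
    _ = _ := by
        simp only [fourierEnergy, mul_sum]
        refine sum_congr rfl fun _ _ => sum_congr rfl fun _ _ => ?_
        ring

lemma sum_mul_pow_lt_pow {M k : ℕ} (a : Fin k → ℕ) (ha : ∀ j, a j < M) :
    ∑ j, a j * M ^ (j : ℕ) < M ^ k := by
  induction k with
  | zero => simp
  | succ k ih =>
    rw [Fin.sum_univ_castSucc, pow_succ]
    have hlow := ih (fun j => a j.castSucc) fun j => ha _
    have hlast := ha (Fin.last k)
    have hstep := Nat.mul_le_mul_right (M ^ k) (Nat.succ_le_of_lt hlast)
    simp only [Fin.val_castSucc, Fin.val_last, Nat.succ_mul] at hlow hstep ⊢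
    linarith

lemma lt_pow_of_mem_Ck {M : ℕ} {A : Finset ℕ} (hA : A ⊆ range M) {k c : ℕ} (hc : c ∈ Ck M A k) :
    c < M ^ k := by
  obtain ⟨a, ha, rfl⟩ := mem_image.mp hc
  exact sum_mul_pow_lt_pow a fun j => mem_range.mp (hA (Fintype.mem_piFinset.mp ha j))

lemma castZMod_mem_add_of_mem_Xrho {M : ℕ} {A : Finset ℕ} (hA : A ⊆ range M) {ρ : ℝ} {k : ℕ}
    {x : Fin (M ^ k)} (hx : x ∈ Xrho M A ρ k) :
    Fin.castZMod _ x ∈ zmodResidues (M ^ k) (Ck M A k) +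
      (Icc (-(⌊2 * ((M ^ k : ℕ) : ℝ) ^ (1 - ρ)⌋₊ : ℤ)) ⌊2 * ((M ^ k : ℕ) : ℝ) ^ (1 - ρ)⌋₊).image
        (Int.cast : ℤ → ZMod (M ^ k)) := by
  obtain ⟨c, hc, m, hm, hmod⟩ := hx
  have hmL : m.natAbs ≤ ⌊2 * ((M ^ k : ℕ) : ℝ) ^ (1 - ρ)⌋₊ :=
    Nat.le_floor (by rwa [Nat.cast_natAbs, Int.cast_abs])
  refine mem_add.mpr ⟨c, ?_, m, mem_image_of_mem _ (mem_Icc.mpr (by omega)), ?_⟩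
  · exact mem_map.mpr ⟨⟨c, lt_pow_of_mem_Ck hA hc⟩, mem_filter.mpr ⟨mem_univ _, hc⟩, rfl⟩
  · have := (ZMod.intCast_eq_intCast_iff _ _ _).mpr hmod
    push_cast at this
    rw [Fin.castZMod_apply, this]

lemma card_Icc_floor_two_mul_le {x : ℝ} (hx : 1 ≤ x) :
    (#(Icc (-(⌊2 * x⌋₊ : ℤ)) ⌊2 * x⌋₊) : ℝ) ≤ 5 * x := by
  have hL : (⌊2 * x⌋₊ : ℝ) ≤ 2 * x := Nat.floor_le (by linarith)
  rw [Int.card_Icc, show (⌊2 * x⌋₊ : ℤ) + 1 - -(⌊2 * x⌋₊ : ℤ) = ((2 * ⌊2 * x⌋₊ + 1 : ℕ) : ℤ) by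
    push_cast; ring, Int.toNat_natCast]
  push_cast
  linarith

/-- For fixed `ρ ∈ (0,1)` there is `C > 0`, independent of `k`, such that
`tr((T*T)²) ≤ C · N^{4(1-ρ)} · t_k` for all `k ≥ 1`, where `T = 1_{X_ρ} F_N 1_{X_ρ}`.
(The trace is real; we state the bound for its real part.) -/
theorem stmt2 (M : ℕ) (hM : 2 ≤ M) (A : Finset ℕ) (hA : A ⊆ Finset.range M)
    (ρ : ℝ) (hρ : ρ ∈ Set.Ioo (0 : ℝ) 1) :
    ∃ C : ℝ, 0 < C ∧ ∀ k : ℕ, 1 ≤ k →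
      (Matrix.trace (((Topk M A ρ k)ᴴ * Topk M A ρ k) ^ 2)).re
        ≤ C * ((M ^ k : ℕ) : ℝ) ^ (4 * (1 - ρ)) * tk M A k := by
  classical
  refine ⟨625, by norm_num, fun k _ => ?_⟩
  have : NeZero (M ^ k) := ⟨pow_ne_zero _ (by omega)⟩
  set N := M ^ k
  set C := zmodResidues N (Ck M A k)
  set X := (Xrho M A ρ k).toFinset.map (Fin.castZMod N)
  set I := (Icc (-(⌊2 * (N : ℝ) ^ (1 - ρ)⌋₊ : ℤ)) ⌊2 * (N : ℝ) ^ (1 - ρ)⌋₊).image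
    (Int.cast : ℤ → ZMod N)
  have hXC : X ⊆ C + I := by
    intro u hu
    obtain ⟨x, hx, rfl⟩ := mem_map.mp hu
    exact castZMod_mem_add_of_mem_Xrho hA (Set.mem_toFinset.mp hx)
  have hNρ : 1 ≤ (N : ℝ) ^ (1 - ρ) :=
    Real.one_le_rpow (by exact_mod_cast NeZero.one_le) (by linarith [hρ.2])
  have hI : (#I : ℝ) ^ 4 ≤ 625 * (N : ℝ) ^ (4 * (1 - ρ)) :=
    calc (#I : ℝ) ^ 4 ≤ (5 * (N : ℝ) ^ (1 - ρ)) ^ 4 := by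
          gcongr
          exact (Nat.cast_le.mpr card_image_le).trans (card_Icc_floor_two_mul_le hNρ)
      _ = 625 * (N : ℝ) ^ (4 * (1 - ρ)) := by
          rw [mul_pow, ← Real.rpow_mul_natCast (Nat.cast_nonneg _), mul_comm (1 - ρ)]
          norm_num
  have hT : Topk M A ρ k = compress (↑(Xrho M A ρ k).toFinset) (dftM N) := by
    rw [Set.coe_toFinset]; rfl
  rw [hT, re_trace_sq_conjTranspose_mul_compress_dftM, tk_eq_fourierEnergy]
  calc ((N : ℝ) ^ 2)⁻¹ * fourierEnergy ZMod.stdAddChar X X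
      ≤ ((N : ℝ) ^ 2)⁻¹ * ((#I : ℝ) ^ 4 * fourierEnergy ZMod.stdAddChar C C) := by
        gcongr; exact fourierEnergy_self_le_of_subset_add _ hXC
    _ ≤ ((N : ℝ) ^ 2)⁻¹ * (625 * (N : ℝ) ^ (4 * (1 - ρ)) *
          fourierEnergy ZMod.stdAddChar C C) := by
        gcongr; exact fourierEnergy_nonneg _ _ _
    _ = 625 * (N : ℝ) ^ (4 * (1 - ρ)) *
          (((N : ℝ) ^ 2)⁻¹ * fourierEnergy ZMod.stdAddChar C C) := by
        ring
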